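/- Assume 𝔱 = 𝔠. If G is a subgroup of the permutation group S_ω such that the coarse space (ω, E_G) is indiscrete, then there exists a free ultrafilter p on ω whose orbit Gp (in βω, under the action gp = {g(A) : A ∈ p}) is not discrete, but every subspace A ⊆ Gp of cardinality |A| < 𝔠 is discrete. -/

import Mathlib

/-!
Since `𝔱 = 𝔠`, a recursion of length `𝔠` builds a tower `(T i)_{i < 𝔠}` of infinite sets,
almost decreasing, whose `i`-th member decides the `i`-th subset of `ω`; it generates a free
ultrafilter `p`. Indiscreteness of `E_G` lets `T i` be chosen together with `g_i ∈ G` moving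
`T i` off itself while `g_i (T i)` stays almost inside all earlier members. For `B ∈ p` with
`T i ⊆* B` and `j > i`, the point `g_j p ≠ p` then lies in the neighbourhood of `p` given by `B`,
so `Gp` is not discrete. Conversely, fewer than `𝔠 = 𝔱` members of `p` almost contain a common
`T j` (otherwise the tower would have an infinite pseudo-intersection). Given `q = g p` in a set
`A` of size `< 𝔠`, pull back by `g` one member of `q` missing each other point of `A`; for such a
`T j`, the set `g (T j)` isolates `q` in `A`.
-/

open Cardinal

/-- The tower number `𝔱`: the least cardinality of a family of infinite
subsets of `ω`, linearly (pre)ordered by almost inclusion `⊆*`, having no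
infinite pseudo-intersection. -/
noncomputable def towerNumber : Cardinal :=
  sInf { c : Cardinal | ∃ T : Set (Set ℕ), #T = c ∧ (∀ t ∈ T, t.Infinite) ∧
    (∀ s ∈ T, ∀ t ∈ T, (s \ t).Finite ∨ (t \ s).Finite) ∧
    ∀ s : Set ℕ, s.Infinite → ∃ t ∈ T, (s \ t).Infinite }

def IsFreeUF (𝒰 : Ultrafilter ℕ) : Prop := ∀ A : Set ℕ, A.Finite → A ∉ 𝒰

/-- `D ⊆ ω` is discrete in the finitary coarse structure `E_G`: for every
finite set `F` of elements of `G`, only finitely many `x ∈ D` satisfy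
`Fx ∩ D ≠ {x}`. -/
def IsEGDiscrete (G : Subgroup (Equiv.Perm ℕ)) (D : Set ℕ) : Prop :=
  ∀ F : Finset (Equiv.Perm ℕ), (↑F : Set (Equiv.Perm ℕ)) ⊆ (G : Set (Equiv.Perm ℕ)) →
    {x ∈ D | ∃ g ∈ F, g x ∈ D ∧ g x ≠ x}.Finite

/-- The coarse space `(ω, E_G)` is indiscrete: every `E_G`-discrete set is
finite (equivalently, bounded). -/
def IsEGIndiscrete (G : Subgroup (Equiv.Perm ℕ)) : Prop :=
  ∀ D : Set ℕ, IsEGDiscrete G D → D.Finite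

def orbitUF (G : Subgroup (Equiv.Perm ℕ)) (𝒰 : Ultrafilter ℕ) :
    Set (Ultrafilter ℕ) :=
  {q | ∃ g ∈ G, q = Ultrafilter.map (⇑g) 𝒰}

open Set Filter Function

local notation:50 s:51 " ⊆* " t:51 => Set.Finite (s \ t)

section AlmostSubset

variable {α β : Type*} {s t u : Set α}

theorem almostSubset_of_subset (h : s ⊆ t) : s ⊆* t := by
  simp [sdiff_eq_empty.2 h]

theorem almostSubset_trans (h₁ : s ⊆* t) (h₂ : t ⊆* u) : s ⊆* u :=
  (h₁.union h₂).subset fun x hx => by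
    by_cases hxt : x ∈ t
    · exact Or.inr ⟨hxt, hx.2⟩
    · exact Or.inl ⟨hx.1, hxt⟩

theorem almostSubset_inter (h₁ : s ⊆* t) (h₂ : s ⊆* u) : s ⊆* t ∩ u := by
  rw [sdiff_inter]
  exact h₁.union h₂

theorem almostSubset_preimage {f : β → α} (hf : Injective f) (h : s ⊆* t) :
    f ⁻¹' s ⊆* f ⁻¹' t := by
  rw [← preimage_sdiff]
  exact h.preimage hf.injOn

theorem image_almostSubset_of_almostSubset_preimage {f : β → α} {s : Set β}
    (h : s ⊆* f ⁻¹' t) : f '' s ⊆* t := by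
  rw [← image_sdiff_preimage]
  exact h.image f

end AlmostSubset

theorem Equiv.Perm.exists_infinite_subset_forall_apply_notMem {α : Type*} (g : Perm α)
    {E : Set α} (hE : E.Infinite) (hg : ∀ x ∈ E, g x ≠ x) :
    ∃ X ⊆ E, X.Infinite ∧ ∀ x ∈ X, g x ∉ X := by
  obtain ⟨f, hfE, hf⟩ := exists_seq_of_forall_finset_exists (· ∈ E)
      (fun x y => x ≠ y ∧ g x ≠ y ∧ g y ≠ x) fun s _ => by
    have hs := s.finite_toSet
    obtain ⟨y, hyE, hy⟩ :=
      hE.exists_notMem_finite ((hs.union (hs.image g)).union (hs.preimage g.injective.injOn))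
    refine ⟨y, hyE, fun x hx => ⟨?_, ?_, ?_⟩⟩ <;> rintro rfl <;> simp_all
  have hinj : Injective f := .of_lt_imp_ne fun m n h => (hf m n h).1
  refine ⟨range f, range_subset_iff.2 hfE, infinite_range_of_injective hinj, ?_⟩
  rintro _ ⟨m, rfl⟩ ⟨n, hn⟩
  rcases lt_trichotomy m n with h | rfl | h
  · exact (hf m n h).2.1 hn.symm
  · exact hg _ (hfE m) hn.symm
  · exact (hf n m h).2.2 hn.symm

namespace IsEGIndiscrete

variable {G : Subgroup (Equiv.Perm ℕ)} {D : Set ℕ}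

theorem exists_infinite_moved (hG : IsEGIndiscrete G) (hD : D.Infinite) :
    ∃ g ∈ G, {x ∈ D | g x ∈ D ∧ g x ≠ x}.Infinite := by
  by_contra! h
  refine hD (hG D fun F hF => (F.finite_toSet.biUnion fun g hg => h g (hF hg)).subset ?_)
  rintro x ⟨hx, g, hg, hgx, hne⟩
  exact mem_biUnion hg ⟨hx, hgx, hne⟩

theorem exists_infinite_subset_moved_off (hG : IsEGIndiscrete G) (hD : D.Infinite) :
    ∃ X ⊆ D, X.Infinite ∧ ∃ g ∈ G, (∀ x ∈ X, g x ∉ X) ∧ g '' X ⊆ D := by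
  obtain ⟨g, hg, hmoved⟩ := hG.exists_infinite_moved hD
  obtain ⟨X, hXE, hX, hgX⟩ :=
    g.exists_infinite_subset_forall_apply_notMem hmoved fun x hx => hx.2.2
  exact ⟨X, fun x hx => (hXE hx).1, hX, g, hg, hgX, image_subset_iff.2 fun x hx => (hXE hx).2.1⟩

end IsEGIndiscrete

theorem exists_infinite_almostSubset_of_card_lt_towerNumber {𝒯 : Set (Set ℕ)}
    (hcard : #𝒯 < towerNumber) (hinf : ∀ t ∈ 𝒯, t.Infinite)
    (hchain : ∀ s ∈ 𝒯, ∀ t ∈ 𝒯, s ⊆* t ∨ t ⊆* s) :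
    ∃ s : Set ℕ, s.Infinite ∧ ∀ t ∈ 𝒯, s ⊆* t := by
  by_contra! h
  exact hcard.not_ge (csInf_le' ⟨𝒯, rfl, hinf, hchain, h⟩)

theorem Ultrafilter.discreteTopology_subtype_iff {α : Type*} {A : Set (Ultrafilter α)} :
    DiscreteTopology A ↔ ∀ q ∈ A, ∃ B ∈ q, ∀ u ∈ A, B ∈ u → u = q := by
  rw [discreteTopology_subtype_iff']
  refine forall₂_congr fun q hq => ⟨fun ⟨U, hU, hUA⟩ => ?_, fun ⟨B, hBq, hB⟩ => ?_⟩
  · have hqU : q ∈ U := (hUA.symm ▸ mem_singleton q : q ∈ U ∩ A).1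
    obtain ⟨_, ⟨B, rfl⟩, hqB, hBU⟩ := ultrafilterBasis_is_basis.exists_subset_of_mem_open hqU hU
    exact ⟨B, hqB, fun u hu hBu => (hUA ▸ ⟨hBU hBu, hu⟩ : u ∈ ({q} : Set _))⟩
  · refine ⟨{u | B ∈ u}, ultrafilter_isOpen_basic B, ?_⟩
    ext u
    exact ⟨fun ⟨hBu, hu⟩ => hB u hu hBu, fun h => h ▸ ⟨hBq, hq⟩⟩

theorem Ultrafilter.map_ne_self {α : Type*} (p : Ultrafilter α) {g : α → α} {X : Set α}
    (hX : X ∈ p) (hg : ∀ x ∈ X, g x ∉ X) : p.map g ≠ p := by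
  intro h
  have hgX : g ⁻¹' X ∈ p := by rw [← Ultrafilter.mem_map, h]; exact hX
  obtain ⟨x, hx, hgx⟩ := p.nonempty_of_mem (inter_mem hX hgX)
  exact hg x hx hgx

theorem IsFreeUF.map {p : Ultrafilter ℕ} (hp : IsFreeUF p) {f : ℕ → ℕ} (hf : Injective f) :
    IsFreeUF (p.map f) := fun _ hA hAp => hp _ (hA.preimage hf.injOn) hAp

theorem IsFreeUF.mem_of_almostSubset {p : Ultrafilter ℕ} (hp : IsFreeUF p) {B C : Set ℕ}
    (hB : B ∈ p) (hBC : B ⊆* C) : C ∈ p := by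
  have hfin : (B \ C)ᶜ ∈ p := p.compl_mem_iff_notMem.2 (hp _ hBC)
  exact mem_of_superset (inter_mem hB hfin) fun x ⟨hxB, hx⟩ => by_contra fun hxC => hx ⟨hxB, hxC⟩

structure IsUltraTower {ι α : Type*} [LinearOrder ι] (T : ι → Set α) : Prop where
  infinite : ∀ i, (T i).Infinite
  almostAntitone : ∀ ⦃i j⦄, i ≤ j → T j ⊆* T i
  decides : ∀ s, ∃ i, T i ⊆ s ∨ T i ⊆ sᶜ

namespace IsUltraTower

variable {ι α : Type*} [LinearOrder ι] {T : ι → Set α} (hT : IsUltraTower T)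
include hT

theorem almostSubset_max_inter {i j : ι} {A B : Set α} (hA : T i ⊆* A) (hB : T j ⊆* B) :
    T (max i j) ⊆* A ∩ B :=
  almostSubset_inter (almostSubset_trans (hT.almostAntitone (le_max_left i j)) hA)
    (almostSubset_trans (hT.almostAntitone (le_max_right i j)) hB)

def ultrafilter : Ultrafilter α :=
  .ofComplNotMemIff
    { sets := {A | ∃ i, T i ⊆* A}
      univ_sets := (hT.decides univ).imp fun i _ => by simp
      sets_of_superset := fun ⟨i, hi⟩ hAB => ⟨i, hi.subset (sdiff_subset_sdiff_right hAB)⟩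
      inter_sets := fun ⟨i, hi⟩ ⟨j, hj⟩ => ⟨max i j, hT.almostSubset_max_inter hi hj⟩ }
    fun s => by
      refine ⟨fun hs => ?_, fun ⟨i, hi⟩ ⟨j, hj⟩ => ?_⟩
      · obtain ⟨i, hi | hi⟩ := hT.decides s
        · exact ⟨i, almostSubset_of_subset hi⟩
        · exact absurd ⟨i, almostSubset_of_subset hi⟩ hs
      · have := hT.almostSubset_max_inter hi hj
        rw [inter_compl_self, sdiff_empty] at this
        exact hT.infinite _ this

theorem mem_ultrafilter {A : Set α} : A ∈ hT.ultrafilter ↔ ∃ i, T i ⊆* A :=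
  Iff.rfl

theorem mem_ultrafilter_self (i : ι) : T i ∈ hT.ultrafilter :=
  ⟨i, by simp⟩

theorem exists_infinite_diff {s : Set α} (hs : s.Infinite) : ∃ i, (s \ T i).Infinite := by
  obtain ⟨t, u, rfl, hdisj, hcard⟩ := hs.exists_union_disjoint_cardinal_eq_of_infinite
  have hfin : t.Finite ↔ u.Finite := by simp only [← lt_aleph0_iff_set_finite, hcard]
  have ht : t.Infinite := fun ht => hs (ht.union (hfin.1 ht))
  have hu : u.Infinite := fun hu => hs ((hfin.2 hu).union hu)
  obtain ⟨i, hi | hi⟩ := hT.decides t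
  · refine ⟨i, hu.mono fun x hx => ⟨Or.inr hx, fun hxT => ?_⟩⟩
    exact hdisj.ne_of_mem (hi hxT) hx rfl
  · exact ⟨i, ht.mono fun x hx => ⟨Or.inl hx, fun hxT => hi hxT hx⟩⟩

theorem exists_gt (i : ι) : ∃ j, i < j := by
  obtain ⟨j, hj⟩ := hT.exists_infinite_diff (hT.infinite i)
  exact ⟨j, lt_of_not_ge fun hji => hj (hT.almostAntitone hji)⟩

end IsUltraTower

namespace IsUltraTower

variable {ι : Type} [LinearOrder ι] {T : ι → Set ℕ} (hT : IsUltraTower T)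
  {G : Subgroup (Equiv.Perm ℕ)}
include hT

theorem isFreeUF : IsFreeUF hT.ultrafilter := fun A hA hAp =>
  let ⟨i, hi⟩ := hT.mem_ultrafilter.1 hAp
  hT.infinite i ((hi.union hA).subset fun x hx => by by_cases x ∈ A <;> simp_all)

theorem bddAbove_of_card_lt_towerNumber {S : Set ι} (hS : #S < towerNumber) : BddAbove S := by
  by_contra hunbdd
  rw [not_bddAbove_iff] at hunbdd
  obtain ⟨s, hs, hsT⟩ := exists_infinite_almostSubset_of_card_lt_towerNumber
    (mk_image_le.trans_lt hS) (forall_mem_image.2 fun i _ => hT.infinite i)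
    (forall_mem_image.2 fun i _ => forall_mem_image.2 fun j _ =>
      (le_total j i).imp (fun h => hT.almostAntitone h) (fun h => hT.almostAntitone h))
  obtain ⟨j, hj⟩ := hT.exists_infinite_diff hs
  obtain ⟨i, hiS, hji⟩ := hunbdd j
  exact hj (almostSubset_trans (hsT _ (mem_image_of_mem T hiS)) (hT.almostAntitone hji.le))

theorem exists_almostSubset_of_card_lt_towerNumber {κ : Type} {C : κ → Set ℕ}
    (hC : ∀ k, C k ∈ hT.ultrafilter) (hκ : #κ < towerNumber) : ∃ j, ∀ k, T j ⊆* C k := by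
  choose idx hidx using fun k => hT.mem_ultrafilter.1 (hC k)
  obtain ⟨j, hj⟩ := hT.bddAbove_of_card_lt_towerNumber (mk_range_le.trans_lt hκ)
  exact ⟨j, fun k => almostSubset_trans (hT.almostAntitone (hj ⟨k, rfl⟩)) (hidx k)⟩

theorem not_discreteTopology_orbitUF
    (hmove : ∀ i, ∃ g ∈ G, (∀ x ∈ T i, g x ∉ T i) ∧ ∀ j < i, g '' T i ⊆* T j) :
    ¬ DiscreteTopology (orbitUF G hT.ultrafilter) := by
  set p := hT.ultrafilter
  rw [Ultrafilter.discreteTopology_subtype_iff]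
  intro h
  obtain ⟨B, hBp, hB⟩ := h p ⟨1, G.one_mem, by simp⟩
  obtain ⟨i, hiB⟩ := hT.mem_ultrafilter.1 hBp
  obtain ⟨j, hij⟩ := hT.exists_gt i
  obtain ⟨g, hg, hgT, hgimg⟩ := hmove j
  refine p.map_ne_self (hT.mem_ultrafilter_self j) hgT
    (hB _ ⟨g, hg, rfl⟩ (Ultrafilter.mem_map.2 (hT.mem_ultrafilter.2 ⟨j, ?_⟩)))
  exact almostSubset_trans (almostSubset_of_subset (subset_preimage_image g (T j)))
    (almostSubset_preimage g.injective (almostSubset_trans (hgimg i hij) hiB))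

theorem discreteTopology_of_card_lt_towerNumber {A : Set (Ultrafilter ℕ)}
    (hA : A ⊆ orbitUF G hT.ultrafilter) (hcard : #A < towerNumber) : DiscreteTopology A := by
  rw [Ultrafilter.discreteTopology_subtype_iff]
  intro q hq
  obtain ⟨g, -, rfl⟩ := hA hq
  have hsep : ∀ u : ↥(A \ {hT.ultrafilter.map g}), ∃ C ∈ hT.ultrafilter.map g, C ∉ u.1 := by
    rintro ⟨u, -, hu⟩
    by_contra! h
    exact hu (Ultrafilter.eq_of_le h)
  choose C hCq hCu using hsep
  obtain ⟨j, hj⟩ := hT.exists_almostSubset_of_card_lt_towerNumber (C := fun u => g ⁻¹' C u) hCq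
    ((mk_le_mk_of_subset sdiff_subset).trans_lt hcard)
  refine ⟨g '' T j, ?_, fun u hu hBu => by_contra fun hne => ?_⟩
  · simpa [Ultrafilter.mem_map, preimage_image_eq _ g.injective] using hT.mem_ultrafilter_self j
  · obtain ⟨h, -, rfl⟩ := hA hu
    exact hCu ⟨_, hu, hne⟩ ((hT.isFreeUF.map h.injective).mem_of_almostSubset hBu
      (image_almostSubset_of_almostSubset_preimage (hj _)))

end IsUltraTower

theorem WellFoundedLT.exists_fun_of_forall_exists {ι β : Type*} [Preorder ι] [WellFoundedLT ι]
    [Nonempty β] (R : (i : ι) → (Iio i → β) → β → Prop)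
    (step : ∀ (T : ι → β) (i : ι), (∀ j < i, R j (fun k => T k) (T j)) →
      ∃ x, R i (fun k => T k) x) :
    ∃ T : ι → β, ∀ i, R i (fun k => T k) (T i) := by
  let T : ι → β := wellFounded_lt.fix fun i prev => Classical.epsilon (R i fun k => prev k k.2)
  have hT : ∀ i, T i = Classical.epsilon (R i fun k => T k) := wellFounded_lt.fix_eq _
  refine ⟨T, fun i => wellFounded_lt.induction (C := fun i => R i (fun k => T k) (T i)) i
    fun i ih => ?_⟩
  rw [hT i]
  exact Classical.epsilon_spec (step T i ih)

structure IsTowerStep (G : Subgroup (Equiv.Perm ℕ)) (𝒯 : Set (Set ℕ)) (S X : Set ℕ) : Prop where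
  infinite : X.Infinite
  almostSubset : ∀ t ∈ 𝒯, X ⊆* t
  decides : X ⊆ S ∨ X ⊆ Sᶜ
  exists_move : ∃ g ∈ G, (∀ x ∈ X, g x ∉ X) ∧ ∀ t ∈ 𝒯, g '' X ⊆* t

section Construction

variable {G : Subgroup (Equiv.Perm ℕ)} (hG : IsEGIndiscrete G)
include hG

theorem exists_isTowerStep (S : Set ℕ) {𝒯 : Set (Set ℕ)} (hcard : #𝒯 < towerNumber)
    (hinf : ∀ t ∈ 𝒯, t.Infinite) (hchain : ∀ s ∈ 𝒯, ∀ t ∈ 𝒯, s ⊆* t ∨ t ⊆* s) :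
    ∃ X, IsTowerStep G 𝒯 S X := by
  obtain ⟨s, hs, hs𝒯⟩ := exists_infinite_almostSubset_of_card_lt_towerNumber hcard hinf hchain
  obtain ⟨D, hDs, hD, hDS⟩ : ∃ D ⊆ s, D.Infinite ∧ (D ⊆ S ∨ D ⊆ Sᶜ) := by
    rcases infinite_union.1 (by rwa [inter_union_sdiff] : (s ∩ S ∪ s \ S).Infinite) with h | h
    · exact ⟨_, inter_subset_left, h, Or.inl inter_subset_right⟩
    · exact ⟨_, sdiff_subset, h, Or.inr fun x hx => hx.2⟩
  obtain ⟨X, hXD, hX, g, hg, hgX, hgD⟩ := hG.exists_infinite_subset_moved_off hD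
  have hD𝒯 : ∀ {Y}, Y ⊆ D → ∀ t ∈ 𝒯, Y ⊆* t := fun hY t ht =>
    (hs𝒯 t ht).subset (sdiff_subset_sdiff_left (hY.trans hDs))
  exact ⟨X, hX, hD𝒯 hXD, hDS.imp hXD.trans hXD.trans, g, hg, hgX, hD𝒯 hgD⟩

variable {ι : Type} [LinearOrder ι] [WellFoundedLT ι] (hι : ∀ i : ι, #(Iio i) < towerNumber)
include hι

theorem exists_isTowerStep_seq (S : ι → Set ℕ) :
    ∃ T : ι → Set ℕ, ∀ i, IsTowerStep G (range fun j : Iio i => T j) (S i) (T i) :=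
  WellFoundedLT.exists_fun_of_forall_exists (fun i prev => IsTowerStep G (range prev) (S i))
    fun T i hT => by
      refine exists_isTowerStep hG (S i) (mk_range_le.trans_lt (hι i))
        (forall_mem_range.2 fun j => (hT j j.2).infinite)
        (forall_mem_range.2 fun j₁ => forall_mem_range.2 fun j₂ => ?_)
      rcases lt_trichotomy j₁.1 j₂.1 with h | h | h
      · exact Or.inr ((hT j₂ j₂.2).almostSubset _ ⟨⟨j₁, h⟩, rfl⟩)
      · simp [h]
      · exact Or.inl ((hT j₁ j₁.2).almostSubset _ ⟨⟨j₂, h⟩, rfl⟩)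

theorem exists_isUltraTower_forall_exists_move {S : ι → Set ℕ} (hS : Surjective S) :
    ∃ T : ι → Set ℕ, IsUltraTower T ∧
      ∀ i, ∃ g ∈ G, (∀ x ∈ T i, g x ∉ T i) ∧ ∀ j < i, g '' T i ⊆* T j := by
  obtain ⟨T, hT⟩ := exists_isTowerStep_seq hG hι S
  refine ⟨T, ⟨fun i => (hT i).infinite, fun i j hij => ?_, fun s => ?_⟩, fun i => ?_⟩
  · rcases hij.lt_or_eq with h | rfl
    · exact (hT j).almostSubset _ ⟨⟨i, h⟩, rfl⟩
    · simp
  · obtain ⟨i, rfl⟩ := hS s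
    exact ⟨i, (hT i).decides⟩
  · obtain ⟨g, hg, hgT, hgimg⟩ := (hT i).exists_move
    exact ⟨g, hg, hgT, fun j hj => hgimg _ ⟨⟨j, hj⟩, rfl⟩⟩

end Construction

theorem indiscrete_gives_ultrafilter_with_nondiscrete_orbit
    (ht : towerNumber = Cardinal.continuum)
    (G : Subgroup (Equiv.Perm ℕ)) (hG : IsEGIndiscrete G) :
    ∃ p : Ultrafilter ℕ, IsFreeUF p ∧
      ¬ DiscreteTopology (orbitUF G p) ∧
      ∀ A : Set (Ultrafilter ℕ), A ⊆ orbitUF G p → #A < Cardinal.continuum →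
        DiscreteTopology A := by
  have hcard : #((ord 𝔠).ToType) = 𝔠 := by rw [mk_toType, card_ord]
  have hι : ∀ i : (ord 𝔠).ToType, #(Iio i) < towerNumber := fun i => by
    rw [ht]
    exact (mk_Iio_lt i (by rw [hcard, Ordinal.type_toType])).trans_eq hcard
  obtain ⟨S⟩ : Nonempty ((ord 𝔠).ToType ≃ Set ℕ) :=
    Cardinal.eq.1 (by rw [hcard, mk_set, mk_nat, two_power_aleph0])
  obtain ⟨T, hT, hmove⟩ := exists_isUltraTower_forall_exists_move hG hι S.surjective
  exact ⟨hT.ultrafilter, hT.isFreeUF, hT.not_discreteTopology_orbitUF hmove,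
    fun A hA hAcard => hT.discreteTopology_of_card_lt_towerNumber hA (ht ▸ hAcard)⟩
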